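/- For every bounded set F ⊆ ℝ^d, the generalized upper box dimension of F equals the upper box dimension of F; that is, limsup_{θ→0⁺} dim_A^θ F = \overline{dim}_B F. -/

import Mathlib

open Filter Metric Set Topology Bornology ENNReal

noncomputable section

variable {X : Type*} [PseudoMetricSpace X]

/-- `coveringNumber r E` is the smallest number of closed balls of radius `r`
needed to cover `E` (with value `⊤` if no finite cover exists). -/
def coveringNumber (r : ℝ) (E : Set X) : ℕ∞ :=
  sInf {n : ℕ∞ | ∃ t : Finset X, (E ⊆ ⋃ x ∈ t, closedBall x r) ∧ (t.card : ℕ∞) = n}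

/-- The Assouad spectrum `dim_A^θ F`. -/
def assouadSpectrum (θ : ℝ) (F : Set X) : ℝ :=
  sInf {s : ℝ | 0 ≤ s ∧ ∃ C > (0 : ℝ), ∀ R : ℝ, 0 < R → R < 1 → ∀ x ∈ F,
    (coveringNumber (R ^ (1 / θ)) (closedBall x R ∩ F) : ℝ≥0∞)
      ≤ ENNReal.ofReal (C * (R / R ^ (1 / θ)) ^ s)}

/-- The upper spectrum `\overline{dim}_A^θ F`. -/
def upperSpectrum (θ : ℝ) (F : Set X) : ℝ :=
  sInf {s : ℝ | 0 ≤ s ∧ ∃ C > (0 : ℝ), ∀ r R : ℝ, 0 < r → r ≤ R ^ (1 / θ) →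
    R ^ (1 / θ) < R → R < 1 → 0 < R → ∀ x ∈ F,
    (coveringNumber r (closedBall x R ∩ F) : ℝ≥0∞) ≤ ENNReal.ofReal (C * (R / r) ^ s)}

/-- The generalized upper box dimension `\overline{dim}_{GB} F := limsup_{θ → 0⁺} dim_A^θ F`. -/
def genUpperBoxDim (F : Set X) : ℝ :=
  limsup (fun θ : ℝ => assouadSpectrum θ F) (𝓝[>] (0 : ℝ))

/-- The quasi-Assouad dimension `dim_{qA} F := lim_{θ → 1⁻} \overline{dim}_A^θ F`
(the limit exists by monotonicity, hence equals the limsup). -/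
def quasiAssouadDim (F : Set X) : ℝ :=
  limsup (fun θ : ℝ => upperSpectrum θ F) (𝓝[<] (1 : ℝ))

/-- The upper box dimension `\overline{dim}_B F := limsup_{δ → 0⁺} log N_δ(F) / (- log δ)`. -/
def upperBoxDim (F : Set X) : ℝ :=
  limsup (fun δ : ℝ => Real.log ((coveringNumber δ F).toNat : ℝ) / (- Real.log δ))
    (𝓝[>] (0 : ℝ))

/-- The Assouad dimension `dim_A F`. -/
def assouadDim (F : Set X) : ℝ :=
  sInf {s : ℝ | 0 ≤ s ∧ ∃ C > (0 : ℝ), ∃ ρ > (0 : ℝ), ∀ r R : ℝ, 0 < r → r < R → R < ρ →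
    ∀ x ∈ F, (coveringNumber r (closedBall x R ∩ F) : ℝ≥0∞) ≤ ENNReal.ofReal (C * (R / r) ^ s)}

/-- The packing pre-measure at scale `δ`: the supremum of `∑ |B_i|^s` over at most countable
collections of disjoint closed balls of radii at most `δ` (and positive) with centres in `F`,
where `|B_i| = 2 r_i` is the diameter. -/
def packingPre (s δ : ℝ) (F : Set X) : ℝ≥0∞ :=
  ⨆ (D : Set (X × ℝ)) (_ : D.Countable)
    (_ : ∀ p ∈ D, p.1 ∈ F ∧ 0 < p.2 ∧ p.2 ≤ δ)
    (_ : D.Pairwise fun p q => Disjoint (closedBall p.1 p.2) (closedBall q.1 q.2)),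
    ∑' p : D, ENNReal.ofReal ((2 * (p : X × ℝ).2) ^ s)

/-- `𝒫₀^s(F) := lim_{δ → 0} 𝒫_δ^s(F)`; the limit exists by monotonicity and equals the inf. -/
def packingPre₀ (s : ℝ) (F : Set X) : ℝ≥0∞ :=
  ⨅ (δ : ℝ) (_ : 0 < δ), packingPre s δ F

/-- The packing (outer) measure `𝒫^s(F)`. -/
def packingMeasure (s : ℝ) (F : Set X) : ℝ≥0∞ :=
  ⨅ (G : ℕ → Set X) (_ : F ⊆ ⋃ i, G i), ∑' i, packingPre₀ s (G i)

/-- The packing dimension `dim_P F = inf {s ≥ 0 : 𝒫^s(F) = 0}`. -/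
def packingDim (F : Set X) : ℝ :=
  sInf {s : ℝ | 0 ≤ s ∧ packingMeasure s F = 0}

/-!
For `s` above the upper box dimension `B` of `F`, `N_r(F) ≤ r^{-s}` at small scales; with
`r = R^{1/θ}` this reads `r^{-s} = (R/r)^{s/(1-θ)}`, so `dim_A^θ F ≤ B/(1-θ)`. Conversely, cover `F`
by `N_{R/2}(F) ≲ R^{-s'}` balls of radius `R/2` (`s' > B`); each one meeting `F` lies in a ball
`B(x, R)` with `x ∈ F`, so if `s` is admissible for `dim_A^θ F` then
`N_r(F) ≲ R^{-s'} (R/r)^s`, i.e. `B ≤ θ s' + (1-θ) s`, whence `B ≤ dim_A^θ F`.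
Letting `θ → 0` squeezes `dim_A^θ F` to `B`.

In finite dimension the doubling property gives `N_δ(F) ≲ δ^{-K}`, so the function whose `limsup`
defines `B` is bounded above and `B` is not the junk value of an unbounded `limsup`.
-/

lemma coveringNumber_le_card {r : ℝ} {E : Set X} (t : Finset X)
    (h : E ⊆ ⋃ x ∈ t, closedBall x r) : coveringNumber r E ≤ t.card :=
  sInf_le ⟨t, h, rfl⟩

lemma exists_finset_card_le_of_coveringNumber_le {r : ℝ} {E : Set X} {n : ℕ}
    (h : coveringNumber r E ≤ n) : ∃ t : Finset X, E ⊆ ⋃ x ∈ t, closedBall x r ∧ t.card ≤ n := by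
  obtain ⟨_, ⟨t, ht, rfl⟩, hlt⟩ :=
    sInf_lt_iff.1 (h.trans_lt (ENat.natCast_lt_natCast.2 n.lt_succ_self))
  exact ⟨t, ht, Nat.lt_succ_iff.1 (ENat.natCast_lt_natCast.1 hlt)⟩

lemma coveringNumber_empty (r : ℝ) : coveringNumber r (∅ : Set X) = 0 :=
  nonpos_iff_eq_zero.1 <| by
    simpa using coveringNumber_le_card (r := r) (∅ : Finset X) (empty_subset _)

lemma coveringNumber_mono_set {r : ℝ} {E E' : Set X} (h : E ⊆ E') :
    coveringNumber r E ≤ coveringNumber r E' :=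
  le_sInf fun _ ⟨t, ht, hcard⟩ => hcard ▸ coveringNumber_le_card t (h.trans ht)

lemma coveringNumber_anti {r r' : ℝ} (E : Set X) (h : r ≤ r') :
    coveringNumber r' E ≤ coveringNumber r E :=
  le_sInf fun _ ⟨t, ht, hcard⟩ => hcard ▸ coveringNumber_le_card t
    (ht.trans (iUnion₂_mono fun _ _ => closedBall_subset_closedBall h))

lemma coveringNumber_ne_top {r : ℝ} {E : Set X} (hr : 0 < r) (hE : TotallyBounded E) :
    coveringNumber r E ≠ ⊤ := by
  obtain ⟨t, htf, ht⟩ := totallyBounded_iff.1 hE r hr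
  refine ne_top_of_le_ne_top (ENat.natCast_ne_top htf.toFinset.card) (coveringNumber_le_card _ ?_)
  simpa using ht.trans (iUnion₂_mono fun _ _ => ball_subset_closedBall)

lemma coveringNumber_le_card_mul {r : ℝ} {E : Set X} {n : ℕ} (t : Finset X) (G : X → Set X)
    (hE : E ⊆ ⋃ y ∈ t, G y) (hG : ∀ y ∈ t, coveringNumber r (G y) ≤ n) :
    coveringNumber r E ≤ (t.card * n : ℕ) := by
  classical
  choose u hu hcard using fun y (hy : y ∈ t) => exists_finset_card_le_of_coveringNumber_le (hG y hy)
  refine (coveringNumber_le_card (t.attach.biUnion fun y => u y.1 y.2) ?_).trans ?_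
  · intro z hz
    obtain ⟨y, hy, hzy⟩ := mem_iUnion₂.1 (hE hz)
    obtain ⟨x, hx, hzx⟩ := mem_iUnion₂.1 (hu y hy hzy)
    exact mem_iUnion₂.2 ⟨x, Finset.mem_biUnion.2 ⟨⟨y, hy⟩, Finset.mem_attach _ _, hx⟩, hzx⟩
  · refine ENat.natCast_le_natCast.2 (Finset.card_biUnion_le.trans ?_)
    simpa using Finset.sum_le_card_nsmul t.attach _ n fun y _ => hcard y.1 y.2

lemma coveringNumber_le_mul_of_forall_closedBall_inter_le {F : Set X} {r R : ℝ} {m n : ℕ}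
    (hm : coveringNumber (R / 2) F ≤ m)
    (hn : ∀ x ∈ F, coveringNumber r (closedBall x R ∩ F) ≤ n) :
    coveringNumber r F ≤ (m * n : ℕ) := by
  obtain ⟨t, ht, hcard⟩ := exists_finset_card_le_of_coveringNumber_le hm
  refine (coveringNumber_le_card_mul t (fun y => closedBall y (R / 2) ∩ F) ?_ ?_).trans
    (ENat.natCast_le_natCast.2 (Nat.mul_le_mul_right n hcard))
  · intro z hz
    obtain ⟨y, hy, hzy⟩ := mem_iUnion₂.1 (ht hz)
    exact mem_iUnion₂.2 ⟨y, hy, hzy, hz⟩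
  · intro y _
    rcases (closedBall y (R / 2) ∩ F).eq_empty_or_nonempty with he | ⟨x, hxy, hx⟩
    · exact he ▸ (coveringNumber_empty r).trans_le zero_le
    refine le_trans (coveringNumber_mono_set ?_) (hn x hx)
    refine fun z hz => ⟨?_, hz.2⟩
    exact (dist_triangle_right z x y).trans
      (by linarith [mem_closedBall.1 hz.1, mem_closedBall.1 hxy])

lemma ENat.le_floor_of_toENNReal_le_ofReal {m : ℕ∞} {b : ℝ}
    (h : (m : ℝ≥0∞) ≤ ENNReal.ofReal b) : m ≤ (⌊b⌋₊ : ℕ) := by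
  lift m to ℕ using fun hm => by simp [hm] at h
  rcases Nat.eq_zero_or_pos m with rfl | hm
  · exact zero_le
  rw [ENat.toENNReal_coe, ENNReal.natCast_le_ofReal hm.ne'] at h
  exact ENat.natCast_le_natCast.2 (Nat.le_floor h)

lemma ENat.toENNReal_le_ofReal {m : ℕ∞} {b : ℝ} (hm : m ≠ ⊤) (h : (m.toNat : ℝ) ≤ b) :
    (m : ℝ≥0∞) ≤ ENNReal.ofReal b := by
  lift m to ℕ using hm
  simpa [← ENNReal.ofReal_natCast] using ENNReal.ofReal_le_ofReal h

lemma toNat_coveringNumber_le_mul_of_forall_closedBall_inter_le {F : Set X} {r R b : ℝ}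
    (hfin : coveringNumber (R / 2) F ≠ ⊤) (hb : 0 ≤ b)
    (h : ∀ x ∈ F, (coveringNumber r (closedBall x R ∩ F) : ℝ≥0∞) ≤ ENNReal.ofReal b) :
    ((coveringNumber r F).toNat : ℝ) ≤ (coveringNumber (R / 2) F).toNat * b := by
  have hN := coveringNumber_le_mul_of_forall_closedBall_inter_le (ENat.natCast_toNat hfin).ge
    fun x hx => ENat.le_floor_of_toENNReal_le_ofReal (h x hx)
  calc ((coveringNumber r F).toNat : ℝ) ≤ (coveringNumber (R / 2) F).toNat * ⌊b⌋₊ := by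
        exact_mod_cast ENat.toNat_le_of_le_natCast hN
    _ ≤ (coveringNumber (R / 2) F).toNat * b := by gcongr; exact Nat.floor_le hb

section BoxDimension

def boxCountingRatio (F : Set X) (δ : ℝ) : ℝ :=
  Real.log ((coveringNumber δ F).toNat : ℝ) / -Real.log δ

variable {F : Set X}

lemma upperBoxDim_eq_limsup_boxCountingRatio :
    upperBoxDim F = limsup (boxCountingRatio F) (𝓝[>] 0) :=
  rfl

lemma boxCountingRatio_le_iff {δ a : ℝ} (hδ0 : 0 < δ) (hδ1 : δ < 1) (ha : 0 ≤ a) :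
    boxCountingRatio F δ ≤ a ↔ ((coveringNumber δ F).toNat : ℝ) ≤ δ ^ (-a) := by
  have hlog : 0 < -Real.log δ := neg_pos.2 (Real.log_neg hδ0 hδ1)
  rw [boxCountingRatio, div_le_iff₀ hlog]
  rcases Nat.eq_zero_or_pos (coveringNumber δ F).toNat with h | h
  · simpa [h, Real.rpow_nonneg hδ0.le] using mul_nonneg ha hlog.le
  · rw [Real.rpow_def_of_pos hδ0, ← Real.log_le_iff_le_exp (by exact_mod_cast h)]
    ring_nf

lemma eventually_boxCountingRatio_nonneg (F : Set X) :
    ∀ᶠ δ in 𝓝[>] 0, 0 ≤ boxCountingRatio F δ := by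
  filter_upwards [Ioo_mem_nhdsGT one_pos] with δ hδ
  exact div_nonneg (Real.log_natCast_nonneg _) (neg_nonneg.2 (Real.log_nonpos hδ.1.le hδ.2.le))

lemma upperBoxDim_nonneg (F : Set X) : 0 ≤ upperBoxDim F := by
  rw [upperBoxDim_eq_limsup_boxCountingRatio, limsup_eq]
  refine Real.sInf_nonneg fun a (ha : ∀ᶠ δ in 𝓝[>] 0, boxCountingRatio F δ ≤ a) => ?_
  obtain ⟨δ, hδa, hδ0⟩ := (ha.and (eventually_boxCountingRatio_nonneg F)).exists
  exact hδ0.trans hδa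

lemma eventually_boxCountingRatio_le {C u ε : ℝ} (hu : 0 ≤ u) (hε : 0 < ε)
    (h : ∀ᶠ δ in 𝓝[>] 0, ((coveringNumber δ F).toNat : ℝ) ≤ C * δ ^ (-u)) :
    ∀ᶠ δ in 𝓝[>] 0, boxCountingRatio F δ ≤ u + ε := by
  filter_upwards [h, (tendsto_rpow_neg_nhdsGT_zero (neg_lt_zero.2 hε)).eventually_ge_atTop C,
    Ioo_mem_nhdsGT one_pos] with δ hN hC hδ
  rw [boxCountingRatio_le_iff hδ.1 hδ.2 (by positivity)]
  calc ((coveringNumber δ F).toNat : ℝ) ≤ C * δ ^ (-u) := hN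
    _ ≤ δ ^ (-ε) * δ ^ (-u) := mul_le_mul_of_nonneg_right hC (Real.rpow_nonneg hδ.1.le _)
    _ = δ ^ (-(u + ε)) := by rw [← Real.rpow_add hδ.1]; ring_nf

lemma upperBoxDim_le_of_eventually_le_mul_rpow {C u : ℝ} (hu : 0 ≤ u)
    (h : ∀ᶠ δ in 𝓝[>] 0, ((coveringNumber δ F).toNat : ℝ) ≤ C * δ ^ (-u)) :
    upperBoxDim F ≤ u :=
  le_of_forall_pos_le_add fun _ hε =>
    limsup_le_of_le
      (isBoundedUnder_of_eventually_ge (eventually_boxCountingRatio_nonneg F)).isCoboundedUnder_le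
      (eventually_boxCountingRatio_le hu hε h)

lemma isBoundedUnder_boxCountingRatio {C u : ℝ} (hu : 0 ≤ u)
    (h : ∀ᶠ δ in 𝓝[>] 0, ((coveringNumber δ F).toNat : ℝ) ≤ C * δ ^ (-u)) :
    IsBoundedUnder (· ≤ ·) (𝓝[>] 0) (boxCountingRatio F) :=
  isBoundedUnder_of_eventually_le (eventually_boxCountingRatio_le hu one_pos h)

lemma eventually_coveringNumber_le_rpow_of_upperBoxDim_lt {s : ℝ}
    (hb : IsBoundedUnder (· ≤ ·) (𝓝[>] 0) (boxCountingRatio F)) (hs : upperBoxDim F < s) :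
    ∀ᶠ δ in 𝓝[>] 0, ((coveringNumber δ F).toNat : ℝ) ≤ δ ^ (-s) := by
  filter_upwards [eventually_lt_of_limsup_lt hs hb, Ioo_mem_nhdsGT one_pos] with δ hlt hδ
  exact (boxCountingRatio_le_iff hδ.1 hδ.2 ((upperBoxDim_nonneg F).trans hs.le)).1 hlt.le

end BoxDimension

section AssouadSpectrum

def IsAssouadSpectrumBound (θ s : ℝ) (F : Set X) : Prop :=
  ∃ C > (0 : ℝ), ∀ R : ℝ, 0 < R → R < 1 → ∀ x ∈ F,
    (coveringNumber (R ^ (1 / θ)) (closedBall x R ∩ F) : ℝ≥0∞)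
      ≤ ENNReal.ofReal (C * (R / R ^ (1 / θ)) ^ s)

variable {F : Set X} {θ s : ℝ}

lemma assouadSpectrum_le (hs : 0 ≤ s) (h : IsAssouadSpectrumBound θ s F) :
    assouadSpectrum θ F ≤ s :=
  csInf_le ⟨0, fun _ ht => ht.1⟩ ⟨hs, h⟩

lemma le_assouadSpectrum {b : ℝ} (hne : ∃ s, 0 ≤ s ∧ IsAssouadSpectrumBound θ s F)
    (h : ∀ s, 0 ≤ s → IsAssouadSpectrumBound θ s F → b ≤ s) : b ≤ assouadSpectrum θ F :=
  le_csInf hne fun s hs => h s hs.1 hs.2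

lemma isAssouadSpectrumBound_div_one_sub (hθ0 : 0 < θ) (hθ1 : θ < 1) (hs : 0 ≤ s)
    (hF : TotallyBounded F)
    (h : ∀ᶠ δ in 𝓝[>] 0, ((coveringNumber δ F).toNat : ℝ) ≤ δ ^ (-s)) :
    IsAssouadSpectrumBound θ (s / (1 - θ)) F := by
  obtain ⟨δ₀, hδ₀, hsmall⟩ := mem_nhdsGT_iff_exists_Ioo_subset.1 h
  set C := max 1 ((coveringNumber δ₀ F).toNat : ℝ)
  refine ⟨C, one_pos.trans_le (le_max_left _ _), fun R hR0 hR1 x _ => ?_⟩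
  set r := R ^ (1 / θ) with hr_def
  have hr0 : 0 < r := Real.rpow_pos_of_pos hR0 _
  have hrR : r ≤ R := by
    simpa only [Real.rpow_one] using
      Real.rpow_le_rpow_of_exponent_ge hR0 hR1.le ((one_le_div hθ0).2 hθ1.le)
  have hratio : 1 ≤ (R / r) ^ (s / (1 - θ)) :=
    Real.one_le_rpow ((one_le_div hr0).2 hrR) (div_nonneg hs (sub_pos.2 hθ1).le)
  have hbound : ((coveringNumber r F).toNat : ℝ) ≤ C * (R / r) ^ (s / (1 - θ)) := by
    rcases lt_or_ge r δ₀ with hr | hr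
    · have hscale : (R / r) ^ (s / (1 - θ)) = r ^ (-s) := by
        have hdiv : R / R ^ (1 / θ) = R ^ (1 - 1 / θ) := by rw [Real.rpow_sub hR0, Real.rpow_one]
        rw [hr_def, hdiv, ← Real.rpow_mul hR0.le, ← Real.rpow_mul hR0.le]
        congr 1
        field_simp [(sub_pos.2 hθ1).ne']
        ring
      rw [hscale]
      exact (hsmall ⟨hr0, hr⟩).trans (le_mul_of_one_le_left (by positivity) (le_max_left _ _))
    · calc ((coveringNumber r F).toNat : ℝ) ≤ (coveringNumber δ₀ F).toNat := by
            exact_mod_cast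
              ENat.toNat_le_toNat (coveringNumber_anti F hr) (coveringNumber_ne_top hδ₀ hF)
        _ ≤ C := le_max_right _ _
        _ ≤ C * (R / r) ^ (s / (1 - θ)) := le_mul_of_one_le_right (by positivity) hratio
  calc (coveringNumber r (closedBall x R ∩ F) : ℝ≥0∞) ≤ coveringNumber r F :=
        ENat.toENNReal_le.2 (coveringNumber_mono_set inter_subset_right)
    _ ≤ ENNReal.ofReal (C * (R / r) ^ (s / (1 - θ))) :=
        ENat.toENNReal_le_ofReal (coveringNumber_ne_top hr0 hF) hbound

lemma tendsto_rpow_div_two_nhdsGT_zero {θ : ℝ} (hθ : 0 < θ) :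
    Tendsto (fun δ : ℝ => δ ^ θ / 2) (𝓝[>] 0) (𝓝[>] 0) := by
  refine tendsto_nhdsWithin_iff.2 ⟨?_, ?_⟩
  · simpa [Real.zero_rpow hθ.ne'] using
      ((Real.continuousAt_rpow_const 0 θ (Or.inr hθ.le)).tendsto.div_const 2).mono_left
        nhdsWithin_le_nhds
  · filter_upwards [self_mem_nhdsWithin] with δ (hδ : 0 < δ)
    exact show 0 < δ ^ θ / 2 by positivity

lemma upperBoxDim_le_of_isAssouadSpectrumBound_of_lt {s' : ℝ} (hθ0 : 0 < θ) (hθ1 : θ < 1)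
    (hs : 0 ≤ s) (hF : TotallyBounded F)
    (hb : IsBoundedUnder (· ≤ ·) (𝓝[>] 0) (boxCountingRatio F)) (hs' : upperBoxDim F < s')
    (h : IsAssouadSpectrumBound θ s F) : upperBoxDim F ≤ θ * s' + (1 - θ) * s := by
  obtain ⟨C, hC, hlocal⟩ := h
  have hs'0 : 0 ≤ s' := (upperBoxDim_nonneg F).trans hs'.le
  refine upperBoxDim_le_of_eventually_le_mul_rpow (C := C * 2 ^ s') (by positivity) ?_
  filter_upwards [(tendsto_rpow_div_two_nhdsGT_zero hθ0).eventually
      (eventually_coveringNumber_le_rpow_of_upperBoxDim_lt hb hs'),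
    Ioo_mem_nhdsGT one_pos] with δ hcoarse ⟨hδ0, hδ1⟩
  set R := δ ^ θ with hR_def
  have hR0 : 0 < R := Real.rpow_pos_of_pos hδ0 θ
  have hRθ : R ^ (1 / θ) = δ := by
    rw [hR_def, ← Real.rpow_mul hδ0.le, mul_one_div_cancel hθ0.ne', Real.rpow_one]
  have hcoarse_pow : (R / 2) ^ (-s') = 2 ^ s' * δ ^ (-(θ * s')) := by
    rw [Real.div_rpow hR0.le zero_le_two, Real.rpow_neg zero_le_two, hR_def,
      ← Real.rpow_mul hδ0.le, div_inv_eq_mul, mul_comm, neg_mul_eq_mul_neg]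
  have hfine_pow : (R / δ) ^ s = δ ^ ((θ - 1) * s) := by
    rw [hR_def, ← Real.rpow_sub_one hδ0.ne', ← Real.rpow_mul hδ0.le]
  calc ((coveringNumber δ F).toNat : ℝ)
      ≤ (coveringNumber (R / 2) F).toNat * (C * (R / δ) ^ s) := by
        refine toNat_coveringNumber_le_mul_of_forall_closedBall_inter_le
          (coveringNumber_ne_top (by positivity) hF) (by positivity) fun x hx => ?_
        simpa only [hRθ] using hlocal R hR0 (Real.rpow_lt_one hδ0.le hδ1 hθ0) x hx
    _ ≤ (R / 2) ^ (-s') * (C * (R / δ) ^ s) := by gcongr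
    _ = C * 2 ^ s' * δ ^ (-(θ * s' + (1 - θ) * s)) := by
        rw [hcoarse_pow, hfine_pow, show -(θ * s' + (1 - θ) * s) = -(θ * s') + (θ - 1) * s by ring,
          Real.rpow_add hδ0]
        ring

lemma upperBoxDim_le_of_isAssouadSpectrumBound (hθ0 : 0 < θ) (hθ1 : θ < 1) (hs : 0 ≤ s)
    (hF : TotallyBounded F) (hb : IsBoundedUnder (· ≤ ·) (𝓝[>] 0) (boxCountingRatio F))
    (h : IsAssouadSpectrumBound θ s F) : upperBoxDim F ≤ s := by
  refine le_of_mul_le_mul_left (le_of_forall_pos_le_add fun ε hε => ?_) (sub_pos.2 hθ1)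
  have := upperBoxDim_le_of_isAssouadSpectrumBound_of_lt (s' := upperBoxDim F + ε / θ) hθ0 hθ1
    hs hF hb (by linarith [div_pos hε hθ0]) h
  rw [mul_add, mul_div_cancel₀ _ hθ0.ne'] at this
  linarith

end AssouadSpectrum

theorem tendsto_assouadSpectrum_nhdsGT_zero {F : Set X} (hF : TotallyBounded F)
    (hb : IsBoundedUnder (· ≤ ·) (𝓝[>] 0) (boxCountingRatio F)) :
    Tendsto (fun θ => assouadSpectrum θ F) (𝓝[>] 0) (𝓝 (upperBoxDim F)) := by
  set B := upperBoxDim F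
  have hB : 0 ≤ B := upperBoxDim_nonneg F
  have hupper : ∀ θ ∈ Ioo (0 : ℝ) 1, ∀ s, B < s → IsAssouadSpectrumBound θ (s / (1 - θ)) F :=
    fun θ hθ s hs => isAssouadSpectrumBound_div_one_sub hθ.1 hθ.2 (hB.trans hs.le) hF
      (eventually_coveringNumber_le_rpow_of_upperBoxDim_lt hb hs)
  have hlim : Tendsto (fun θ : ℝ => B / (1 - θ)) (𝓝[>] 0) (𝓝 B) := by
    have : ContinuousAt (fun θ : ℝ => B / (1 - θ)) 0 :=
      continuousAt_const.div (continuousAt_const.sub continuousAt_id) (by norm_num)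
    simpa using this.tendsto.mono_left nhdsWithin_le_nhds
  refine tendsto_of_tendsto_of_tendsto_of_le_of_le' tendsto_const_nhds hlim ?_ ?_
  · filter_upwards [Ioo_mem_nhdsGT one_pos] with θ hθ
    refine le_assouadSpectrum ⟨_, ?_, hupper θ hθ (B + 1) (lt_add_one B)⟩ fun s hs h =>
      upperBoxDim_le_of_isAssouadSpectrumBound hθ.1 hθ.2 hs hF hb h
    exact div_nonneg (by linarith) (sub_pos.2 hθ.2).le
  · filter_upwards [Ioo_mem_nhdsGT one_pos] with θ hθ
    have h1θ : 0 < 1 - θ := sub_pos.2 hθ.2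
    refine le_of_forall_gt_imp_ge_of_dense fun t ht => ?_
    have hBt : B < t * (1 - θ) := (div_lt_iff₀ h1θ).1 ht
    simpa [mul_div_cancel_right₀ t h1θ.ne'] using
      assouadSpectrum_le (div_nonneg (hB.trans hBt.le) h1θ.le) (hupper θ hθ _ hBt)

theorem genUpperBoxDim_eq_upperBoxDim_of_totallyBounded {F : Set X} (hF : TotallyBounded F)
    (hb : IsBoundedUnder (· ≤ ·) (𝓝[>] 0) (boxCountingRatio F)) :
    genUpperBoxDim F = upperBoxDim F :=
  (tendsto_assouadSpectrum_nhdsGT_zero hF hb).limsup_eq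

section NormedSpace

variable {V : Type*} [NormedAddCommGroup V] [NormedSpace ℝ V]

lemma coveringNumber_closedBall_mul_le (x : V) {c : ℝ} (hc : 0 < c) (r R : ℝ) :
    coveringNumber (c * r) (closedBall x (c * R)) ≤ coveringNumber r (closedBall (0 : V) R) := by
  classical
  refine le_sInf fun _ ⟨t, ht, hcard⟩ => hcard ▸ ?_
  refine (coveringNumber_le_card (t.image fun y => x + c • y) fun z hz => ?_).trans
    (ENat.natCast_le_natCast.2 Finset.card_image_le)
  have hw : c⁻¹ • (z - x) ∈ closedBall (0 : V) R := by
    rw [mem_closedBall_zero_iff, norm_smul, norm_inv, Real.norm_of_nonneg hc.le,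
      inv_mul_le_iff₀ hc, ← dist_eq_norm]
    exact hz
  obtain ⟨y, hy, hwy⟩ := mem_iUnion₂.1 (ht hw)
  refine mem_iUnion₂.2 ⟨x + c • y, Finset.mem_image_of_mem _ hy, ?_⟩
  have hz_eq : z - (x + c • y) = c • (c⁻¹ • (z - x) - y) := by
    rw [smul_sub, smul_inv_smul₀ hc.ne']; abel
  rw [mem_closedBall, dist_eq_norm, hz_eq, norm_smul, Real.norm_of_nonneg hc.le, ← dist_eq_norm]
  exact mul_le_mul_of_nonneg_left hwy hc.le

lemma coveringNumber_closedBall_div_two_pow_le {A : ℕ}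
    (hA : coveringNumber (1 / 2 : ℝ) (closedBall (0 : V) 1) ≤ A) (k : ℕ) (x : V) {M : ℝ}
    (hM : 0 < M) :
    coveringNumber (M / 2 ^ k) (closedBall x M) ≤ (A ^ k : ℕ) := by
  induction k generalizing x M with
  | zero => simpa using coveringNumber_le_card {x} (by simp)
  | succ k ih =>
    have hhalf : coveringNumber (M / 2) (closedBall x M) ≤ A := by
      have := coveringNumber_closedBall_mul_le x hM (1 / 2) 1
      rw [mul_one, mul_one_div] at this
      exact this.trans hA
    obtain ⟨t, ht, hcard⟩ := exists_finset_card_le_of_coveringNumber_le hhalf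
    refine (coveringNumber_le_card_mul t (fun y => closedBall y (M / 2)) ht fun y _ => ?_).trans
      (ENat.natCast_le_natCast.2 ((Nat.mul_le_mul_right _ hcard).trans_eq (pow_succ' A k).symm))
    simpa [div_div, pow_succ'] using ih y (half_pos hM)

lemma toNat_coveringNumber_closedBall_le {A : ℕ}
    (hA : coveringNumber (1 / 2 : ℝ) (closedBall (0 : V) 1) ≤ A) (x : V) {M δ : ℝ} (hδ : 0 < δ)
    (hδM : δ ≤ M) : ((coveringNumber δ (closedBall x M)).toNat : ℝ) ≤ (2 * M / δ) ^ A := by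
  obtain ⟨k, hk, hk'⟩ := exists_nat_pow_near ((one_le_div hδ).2 hδM) one_lt_two
  have hM : 0 < M := hδ.trans_le hδM
  have hscale : M / 2 ^ (k + 1) ≤ δ := by
    rw [div_le_iff₀ (by positivity)]; linarith [(div_lt_iff₀ hδ).1 hk']
  have hN := (coveringNumber_anti (closedBall x M) hscale).trans
    (coveringNumber_closedBall_div_two_pow_le hA (k + 1) x hM)
  calc ((coveringNumber δ (closedBall x M)).toNat : ℝ) ≤ (A : ℝ) ^ (k + 1) := by
        exact_mod_cast ENat.toNat_le_of_le_natCast hN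
    _ ≤ ((2 : ℝ) ^ A) ^ (k + 1) := by gcongr; exact_mod_cast A.lt_two_pow_self.le
    _ = ((2 : ℝ) ^ (k + 1)) ^ A := by rw [← pow_mul, ← pow_mul, mul_comm]
    _ ≤ (2 * M / δ) ^ A := by
        gcongr
        rw [pow_succ', mul_div_assoc]
        exact mul_le_mul_of_nonneg_left hk zero_le_two

lemma isBoundedUnder_boxCountingRatio_of_isBounded [ProperSpace V] {F : Set V}
    (hF : IsBounded F) : IsBoundedUnder (· ≤ ·) (𝓝[>] 0) (boxCountingRatio F) := by
  set A := (coveringNumber (1 / 2 : ℝ) (closedBall (0 : V) 1)).toNat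
  have hA : coveringNumber (1 / 2 : ℝ) (closedBall (0 : V) 1) ≤ A :=
    (ENat.natCast_toNat (coveringNumber_ne_top (by norm_num)
      (isCompact_closedBall (0 : V) 1).totallyBounded)).ge
  obtain ⟨M, hM⟩ := hF.subset_closedBall 0
  have hFM : F ⊆ closedBall 0 (max M 1) := hM.trans (closedBall_subset_closedBall (le_max_left _ _))
  refine isBoundedUnder_boxCountingRatio (C := (2 * max M 1) ^ A) (u := A) (Nat.cast_nonneg _) ?_
  filter_upwards [Ioo_mem_nhdsGT one_pos] with δ hδ
  have hδM : δ ≤ max M 1 := hδ.2.le.trans (le_max_right _ _)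
  calc ((coveringNumber δ F).toNat : ℝ) ≤ (coveringNumber δ (closedBall 0 (max M 1))).toNat := by
        exact_mod_cast ENat.toNat_le_toNat (coveringNumber_mono_set hFM)
          (coveringNumber_ne_top hδ.1 (isCompact_closedBall _ _).totallyBounded)
    _ ≤ (2 * max M 1 / δ) ^ A := toNat_coveringNumber_closedBall_le hA 0 hδ.1 hδM
    _ = (2 * max M 1) ^ A * δ ^ (-(A : ℝ)) := by
        rw [Real.rpow_neg hδ.1.le, Real.rpow_natCast, div_pow, div_eq_mul_inv]

theorem genUpperBoxDim_eq_upperBoxDim_of_isBounded_of_properSpace [ProperSpace V] {F : Set V}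
    (hF : IsBounded F) : genUpperBoxDim F = upperBoxDim F :=
  genUpperBoxDim_eq_upperBoxDim_of_totallyBounded
    (hF.isCompact_closure.totallyBounded.subset subset_closure)
    (isBoundedUnder_boxCountingRatio_of_isBounded hF)

end NormedSpace

/-- For every bounded `F ⊆ ℝ^d`, the generalized upper box dimension equals
the upper box dimension. -/
theorem genUpperBoxDim_eq_upperBoxDim_of_isBounded
    (d : ℕ) (F : Set (EuclideanSpace ℝ (Fin d))) (hF : IsBounded F) :
    genUpperBoxDim F = upperBoxDim F :=
  genUpperBoxDim_eq_upperBoxDim_of_isBounded_of_properSpace hF
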